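/- arXiv:2102.05993 — 6 statements merged into one kernel-verified Lean document; each statement's English description precedes it below -/
import Mathlib

section
/- Let f : A → B and g : B → C be homomorphisms of commutative rings and set h = g ∘ f. Assume C is faithfully flat as an A-module via h. Let I ⊆ A and J ⊆ B be ideals such that the extension of J to C is contained in the extension of I to C, i.e. J·C ⊆ (I·C) where J·C is generated by g(J) and I·C by h(I). Then every x ∈ A with f(x) ∈ J² satisfies x ∈ I². In particular, if moreover f(I) ⊆ J, then the induced map I/I² → J/J² is injective. -/
/-- Faithfully flat descent: `I ^ n` is the contraction of its extension to `C`, and that extension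
contains the image of `J ^ n`. -/
theorem Ideal.comap_pow_le_pow_of_map_le_map {A B C : Type*} [CommRing A] [CommRing B] [CommRing C]
    [Algebra A C] [Module.FaithfullyFlat A C] (f : A →+* B) (g : B →+* C)
    (hAC : algebraMap A C = g.comp f) {I : Ideal A} {J : Ideal B}
    (hJI : J.map g ≤ I.map (g.comp f)) (n : ℕ) : (J ^ n).comap f ≤ I ^ n := by
  intro x hx
  have hgfx : g (f x) ∈ (I.map (g.comp f)) ^ n := by
    have := Ideal.mem_map_of_mem g hx
    rw [Ideal.map_pow] at this
    exact Ideal.pow_right_mono hJI n this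
  rw [← (I ^ n).comap_map_eq_self_of_faithfullyFlat (B := C), Ideal.mem_comap, Ideal.map_pow, hAC]
  exact hgfx

/-- Let `f : A → B` and `g : B → C` be homomorphisms of commutative rings with
`h = g ∘ f`, and suppose `C` is faithfully flat as an `A`-module via `h`.
If `I ⊆ A` and `J ⊆ B` are ideals with `J·C ⊆ I·C`, then every `x ∈ A` with
`f x ∈ J²` satisfies `x ∈ I²`.  In particular, if moreover `f(I) ⊆ J`, the
induced map `I/I² → J/J²` is injective. -/
theorem stmt0 {A B C : Type*} [CommRing A] [CommRing B] [CommRing C]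
    (f : A →+* B) (g : B →+* C) [Algebra A C]
    (hAC : algebraMap A C = g.comp f)
    [Module.FaithfullyFlat A C]
    (I : Ideal A) (J : Ideal B)
    (hJI : J.map g ≤ I.map (g.comp f)) :
    (∀ x : A, f x ∈ J ^ 2 → x ∈ I ^ 2) ∧
      (Ideal.map f I ≤ J → ∀ x ∈ I, f x ∈ J ^ 2 → x ∈ I ^ 2) := by
  have descent : ∀ x : A, f x ∈ J ^ 2 → x ∈ I ^ 2 := fun x hx =>
    Ideal.comap_pow_le_pow_of_map_le_map f g hAC hJI 2 hx
  exact ⟨descent, fun _ x _ => descent x⟩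
end

section
/- Let A be a Noetherian integrally closed (normal) integral domain, B an integral domain, and f : A → B an injective ring homomorphism such that the induced map Spec B → Spec A is surjective, i.e. every prime ideal of A is of the form f⁻¹(q) for some prime ideal q of B. Let σ be an element of the fraction field Frac(A). If the image of σ under the induced embedding Frac(A) → Frac(B) lies in B, then σ ∈ A. -/
/-!
Suppose `σ ∉ A`. Let `I` be the ideal of denominators of `σ` and `p = (I : c)` an associated prime
of `A ⧸ I`. Then `τ = cσ` satisfies `τ p ⊆ A`. If even `τ p ⊆ p`, then `τ` is integral over `A`
(as `p` is a nonzero finitely generated ideal), so `τ ∈ A` by normality, i.e. `c ∈ I`, which is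
absurd. Hence `σ = u / d` with `d ∈ p` and `u ∉ p`. Mapping `u = dσ` into `B` and choosing a prime
`q` of `B` over `p` gives `f u = f d * σ ∈ q`, so `u ∈ f⁻¹(q) = p`, a contradiction.
-/

theorem Ideal.exists_isPrime_colon_singleton {R : Type*} [CommRing R] [IsNoetherianRing R]
    {I : Ideal R} (hI : I ≠ ⊤) : ∃ c : R, (I.colon {c}).IsPrime := by
  have : Nontrivial (R ⧸ I) := Ideal.Quotient.nontrivial_iff.mpr hI
  obtain ⟨p, hp⟩ := associatedPrimes.nonempty R (R ⧸ I)
  obtain ⟨hprime, x, rfl⟩ := isAssociatedPrime_iff.mp hp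
  obtain ⟨c, rfl⟩ := Ideal.Quotient.mk_surjective x
  refine ⟨c, ?_⟩
  convert hprime using 1
  ext y
  simp [Algebra.smul_def, ← map_mul, Ideal.Quotient.eq_zero_iff_mem]

theorem isIntegral_of_mul_mem_ideal {A K : Type*} [CommRing A] [Field K]
    [Algebra A K] [FaithfulSMul A K] {p : Ideal A} (hp : p ≠ ⊥) (hfg : p.FG) {τ : K}
    (hτ : ∀ y ∈ p, ∃ u ∈ p, algebraMap A K u = algebraMap A K y * τ) : IsIntegral A τ := by
  refine isIntegral_of_smul_mem_submodule (Submodule.map (Algebra.linearMap A K) p) ?_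
    (Submodule.FG.map _ hfg) τ ?_
  · rw [ne_eq, ← Submodule.map_bot (Algebra.linearMap A K)]
    exact (Submodule.map_injective_of_injective (FaithfulSMul.algebraMap_injective A K)).ne hp
  · rintro _ ⟨y, hy, rfl⟩
    obtain ⟨u, hu, huy⟩ := hτ y hy
    exact ⟨u, hu, by simp [huy, mul_comm]⟩

theorem IsIntegrallyClosed.exists_isPrime_eq_mul_of_notMem_range {A K : Type*} [CommRing A]
    [IsDomain A] [IsNoetherianRing A] [IsIntegrallyClosed A] [Field K] [Algebra A K]
    [IsFractionRing A K] {σ : K} (hσ : σ ∉ (algebraMap A K).range) :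
    ∃ p : Ideal A, p.IsPrime ∧
      ∃ d ∈ p, ∃ u ∉ p, algebraMap A K u = algebraMap A K d * σ := by
  set I : Ideal A := (1 : Submodule A K).colon {σ}
  have mem_I (x : A) : x ∈ I ↔ ∃ a : A, algebraMap A K a = algebraMap A K x * σ := by
    simp [I, Submodule.mem_one, Algebra.smul_def]
  have hI : I ≠ ⊤ := fun h ↦ hσ <| by
    obtain ⟨a, ha⟩ := (mem_I 1).mp (h ▸ Submodule.mem_top)
    exact ⟨a, by simpa using ha⟩
  obtain ⟨c, hp⟩ := Ideal.exists_isPrime_colon_singleton hI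
  set p := I.colon {c}
  have mem_p (y : A) : y ∈ p ↔ y * c ∈ I := by simp [p]
  have hpbot : p ≠ ⊥ := by
    obtain ⟨⟨a, b⟩, hab⟩ := IsLocalization.surj (nonZeroDivisors A) σ
    refine fun h ↦ nonZeroDivisors.coe_ne_zero b ?_
    rw [← Submodule.mem_bot A, ← h, mem_p]
    exact I.mul_mem_right c ((mem_I b).mpr ⟨a, by rw [← hab, mul_comm]⟩)
  by_contra! hnone
  have hint : IsIntegral A (algebraMap A K c * σ) := by
    refine isIntegral_of_mul_mem_ideal hpbot (IsNoetherian.noetherian p) fun y hy ↦ ?_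
    obtain ⟨u, hu⟩ := (mem_I _).mp ((mem_p y).mp hy)
    exact ⟨u, by_contra fun hup ↦ hnone p hp _ (p.mul_mem_right c hy) u hup hu,
      by rw [hu, map_mul, mul_assoc]⟩
  obtain ⟨a, ha⟩ := IsIntegrallyClosed.isIntegral_iff.mp hint
  refine hp.ne_top <| (Ideal.eq_top_iff_one p).mpr <| (mem_p 1).mpr ?_
  rw [one_mul, mem_I]
  exact ⟨a, ha⟩

theorem stmt1_general {A B : Type*} [CommRing A] [IsDomain A] [IsNoetherianRing A]
    [IsIntegrallyClosed A] [CommRing B]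
    (f : A →+* B)
    (hsurj : ∀ p : Ideal A, p.IsPrime → ∃ q : Ideal B, q.IsPrime ∧ q.comap f = p)
    (φ : FractionRing A →+* FractionRing B)
    (hφ : φ.comp (algebraMap A (FractionRing A)) =
      (algebraMap B (FractionRing B)).comp f)
    (σ : FractionRing A)
    (hσ : φ σ ∈ (algebraMap B (FractionRing B)).range) :
    σ ∈ (algebraMap A (FractionRing A)).range := by
  by_contra hσA
  obtain ⟨p, hp, d, hd, u, hu, hud⟩ :=
    IsIntegrallyClosed.exists_isPrime_eq_mul_of_notMem_range hσA
  obtain ⟨q, -, rfl⟩ := hsurj p hp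
  obtain ⟨b, hb⟩ := hσ
  have hφ' (x : A) : φ (algebraMap A _ x) = algebraMap B _ (f x) := RingHom.congr_fun hφ x
  have hfud : f u = f d * b := IsFractionRing.injective B (FractionRing B) <| by
    simpa [hφ', ← hb] using congrArg φ hud
  exact hu (by simpa [hfud] using q.mul_mem_right b hd)

/-- Let `A` be a Noetherian integrally closed domain, `B` a domain, and
`f : A → B` an injective ring homomorphism such that `Spec B → Spec A` is
surjective (every prime of `A` is the contraction of a prime of `B`).
If `σ ∈ Frac(A)` maps into `B ⊆ Frac(B)` under the induced embedding
`Frac(A) → Frac(B)`, then `σ ∈ A`. -/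
theorem stmt1 {A B : Type*} [CommRing A] [IsDomain A] [IsNoetherianRing A]
    [IsIntegrallyClosed A] [CommRing B] [IsDomain B]
    (f : A →+* B) (hf : Function.Injective f)
    (hsurj : ∀ p : Ideal A, p.IsPrime → ∃ q : Ideal B, q.IsPrime ∧ q.comap f = p)
    (φ : FractionRing A →+* FractionRing B)
    (hφ : φ.comp (algebraMap A (FractionRing A)) =
      (algebraMap B (FractionRing B)).comp f)
    (σ : FractionRing A)
    (hσ : φ σ ∈ (algebraMap B (FractionRing B)).range) :
    σ ∈ (algebraMap A (FractionRing A)).range :=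
  stmt1_general f hsurj φ hφ σ hσ
end

section
/- Let R and S be commutative rings, ι a finite index set, and (χ_i)_{i∈ι} a family of ring homomorphisms R → S such that for all i ≠ j in ι there exists x ∈ R with χ_i(x) − χ_j(x) a unit of S. Let M be the free S-module with basis (e_i)_{i∈ι} (i.e. M = ι → S), made into an R-module by x · e_i = χ_i(x) · e_i, extended S-linearly. Then every S-linear endomorphism φ of M that commutes with the R-action is diagonal: for every i ∈ ι, φ(e_i) ∈ S · e_i. -/
theorem eq_zero_of_isUnit_sub_of_mul_eq {S : Type*} [CommRing S] {a b y : S}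
    (hab : IsUnit (a - b)) (h : a * y = b * y) : y = 0 :=
  hab.mul_right_eq_zero.mp (by rw [sub_mul, h, sub_self])

namespace Pi

variable {ι S : Type*} [DecidableEq ι]

theorem mul_single_one_eq_smul [Semiring S] (f : ι → S) (i : ι) :
    (fun k => f k * (Pi.single i (1 : S) : ι → S) k) = f i • Pi.single i (1 : S) := by
  ext k
  by_cases hk : k = i <;> simp [hk]

theorem mem_span_single_one_of_forall_ne [Semiring S] {i : ι} {w : ι → S}
    (hw : ∀ j ≠ i, w j = 0) : w ∈ Submodule.span S {Pi.single i (1 : S)} :=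
  Submodule.mem_span_singleton.mpr ⟨w i, by ext j; by_cases hj : j = i <;> simp [hj, hw]⟩

end Pi

theorem stmt2_general {R S : Type*} [CommRing R] [CommRing S] {ι : Type*} [DecidableEq ι]
    (χ : ι → (R →+* S))
    (hsep : ∀ i j : ι, i ≠ j → ∃ x : R, IsUnit (χ i x - χ j x))
    (φ : (ι → S) →ₗ[S] (ι → S))
    (hφ : ∀ (x : R) (v : ι → S), φ (fun i => χ i x * v i) = fun i => χ i x * φ v i) :
    ∀ i : ι, φ (Pi.single i 1) ∈ Submodule.span S {Pi.single i (1 : S)} := by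
  intro i
  refine Pi.mem_span_single_one_of_forall_ne fun j hji => ?_
  obtain ⟨x, hx⟩ := hsep i j (Ne.symm hji)
  -- `e i` is an eigenvector of `x` for `χ i x`, hence so is `φ (e i)`: `χ i x * w j = χ j x * w j`.
  have eigen := congrFun (hφ x (Pi.single i 1)) j
  rw [Pi.mul_single_one_eq_smul (fun k => χ k x), map_smul] at eigen
  exact eq_zero_of_isUnit_sub_of_mul_eq hx eigen

/-- Let `R`, `S` be commutative rings, `ι` a finite index set, and `χ i : R → S`
ring homomorphisms such that for `i ≠ j` there is `x ∈ R` with `χ i x - χ j x`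
a unit of `S`.  Make the free `S`-module `M = ι → S` into an `R`-module by
`x · e_i = χ i x · e_i`.  Then every `S`-linear endomorphism `φ` of `M`
commuting with the `R`-action is diagonal: `φ e_i ∈ S · e_i` for every `i`. -/
theorem stmt2 {R S : Type*} [CommRing R] [CommRing S] {ι : Type*} [Fintype ι] [DecidableEq ι]
    (χ : ι → (R →+* S))
    (hsep : ∀ i j : ι, i ≠ j → ∃ x : R, IsUnit (χ i x - χ j x))
    (φ : (ι → S) →ₗ[S] (ι → S))
    (hφ : ∀ (x : R) (v : ι → S), φ (fun i => χ i x * v i) = fun i => χ i x * φ v i) :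
    ∀ i : ι, φ (Pi.single i 1) ∈ Submodule.span S {Pi.single i (1 : S)} :=
  stmt2_general χ hsep φ hφ
end

section
/- Let p be a prime, n ≥ 1, κ a finite field of characteristic p, and k a perfect field of characteristic p. If τ, τ′ : κ → k are distinct ring homomorphisms, then there exists x ∈ W_n(κ) such that W_n(τ)(x) − W_n(τ′)(x) is a unit of W_n(k). -/
/-! The difference of the Teichmüller lifts of two distinct elements of a field of characteristic
`p` has nonzero constant coefficient, hence is a unit of `W(k)`, and so is its truncation. Since
`W_n(τ)` sends the truncated Teichmüller lift of `a` to that of `τ a`, it suffices to pick `a`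
with `τ a ≠ τ' a`. -/

/-- The ring homomorphism on truncated Witt vectors induced functorially by a
ring homomorphism `f : R →+* S` (acting coordinatewise). -/
noncomputable def TruncatedWittVector.mapRingHom {p : ℕ} [Fact p.Prime] (n : ℕ)
    {R S : Type*} [CommRing R] [CommRing S] (f : R →+* S) :
    TruncatedWittVector p n R →+* TruncatedWittVector p n S :=
  RingHom.liftOfRightInverse (WittVector.truncate n) TruncatedWittVector.out
    TruncatedWittVector.truncateFun_out
    ⟨(WittVector.truncate n).comp (WittVector.map f), by
      intro x hx
      rw [WittVector.mem_ker_truncate] at hx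
      rw [RingHom.mem_ker, RingHom.comp_apply, ← RingHom.mem_ker,
        WittVector.mem_ker_truncate]
      intro i hi
      rw [WittVector.map_coeff, hx i hi, map_zero]⟩

theorem TruncatedWittVector.mapRingHom_truncate {p : ℕ} [Fact p.Prime] (n : ℕ)
    {R S : Type*} [CommRing R] [CommRing S] (f : R →+* S) (x : WittVector p R) :
    mapRingHom n f (WittVector.truncate n x) = WittVector.truncate n (WittVector.map f x) :=
  RingHom.liftOfRightInverse_comp_apply _ _ _ _ _

theorem WittVector.sub_coeff_zero {p : ℕ} [Fact p.Prime] {R : Type*} [CommRing R]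
    (x y : WittVector p R) : (x - y).coeff 0 = x.coeff 0 - y.coeff 0 :=
  map_sub (constantCoeff : WittVector p R →+* R) x y

theorem WittVector.isUnit_teichmuller_sub_teichmuller {p : ℕ} [Fact p.Prime] {k : Type*}
    [Field k] [CharP k p] {b c : k} (h : b ≠ c) :
    IsUnit (teichmuller p b - teichmuller p c) := by
  apply isUnit_of_coeff_zero_ne_zero
  rwa [sub_coeff_zero, teichmuller_coeff_zero, teichmuller_coeff_zero, sub_ne_zero]

theorem stmt3_general (p n : ℕ) [Fact p.Prime]
    {κ k : Type*} [Field κ]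
    [Field k] [CharP k p]
    (τ τ' : κ →+* k) (hττ' : τ ≠ τ') :
    ∃ x : TruncatedWittVector p n κ,
      IsUnit (TruncatedWittVector.mapRingHom n τ x -
        TruncatedWittVector.mapRingHom n τ' x) := by
  obtain ⟨a, ha⟩ := DFunLike.ne_iff.mp hττ'
  refine ⟨WittVector.truncate n (WittVector.teichmuller p a), ?_⟩
  simp only [TruncatedWittVector.mapRingHom_truncate, WittVector.map_teichmuller, ← map_sub]
  exact (WittVector.isUnit_teichmuller_sub_teichmuller ha).map _

/-- Let `p` be a prime, `n ≥ 1`, `κ` a finite field of characteristic `p` and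
`k` a perfect field of characteristic `p`.  If `τ, τ' : κ → k` are distinct
ring homomorphisms, then there exists `x ∈ W_n(κ)` such that
`W_n(τ)(x) - W_n(τ')(x)` is a unit of `W_n(k)`. -/
theorem stmt3 (p n : ℕ) [Fact p.Prime] (hn : 1 ≤ n)
    {κ k : Type*} [Field κ] [Fintype κ] [CharP κ p]
    [Field k] [CharP k p] [PerfectField k]
    (τ τ' : κ →+* k) (hττ' : τ ≠ τ') :
    ∃ x : TruncatedWittVector p n κ,
      IsUnit (TruncatedWittVector.mapRingHom n τ x -
        TruncatedWittVector.mapRingHom n τ' x) :=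
  stmt3_general p n τ τ' hττ'
end

section
/- Fix a prime p and integers m, n ≥ 1. Let κ = 𝔽_{p^m} and let k be an algebraically closed field of characteristic p. With M(f)_n as defined in the context for a function f : I → {0,1}, the canonical map W_n(κ) → End(M(f)_n), sending c ∈ W_n(κ) to the endomorphism determined by e_τ ↦ W_n(τ)(c) · e_τ, is an injective ring homomorphism whose image is exactly the set of W_n(k)-linear endomorphisms of M(f)_n that commute with F, V and the W_n(κ)-action. In particular, the ring of such endomorphisms of M(f)_n is isomorphic to W_n(κ). -/
section Dieudonne

variable (p n : ℕ) [Fact p.Prime] (κ k : Type*) [CommRing κ] [Field k]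
  [CharP k p] [PerfectField k]

/-- The `W_n(κ)`-action on the Dieudonné module `M(f)_n`, i.e. the free
`W_n(k)`-module on the set `I` of ring homomorphisms `κ → k`, determined by
`c • e_τ = W_n(τ)(c) • e_τ`. -/
noncomputable def wittAct (c : TruncatedWittVector p n κ)
    (v : (κ →+* k) → TruncatedWittVector p n k) :
    (κ →+* k) → TruncatedWittVector p n k :=
  fun τ => TruncatedWittVector.mapRingHom n τ c * v τ

/-- The Frobenius `F` of the Dieudonné module `M(f)_n`: the additive,
`σ`-semilinear map determined by `F e_τ = p ^ (f τ) • e_{τ+1}`, where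
`τ + 1 = frobenius ∘ τ` is the successor of `τ`. -/
noncomputable def wittF (f : (κ →+* k) → ℕ)
    (v : (κ →+* k) → TruncatedWittVector p n k) :
    (κ →+* k) → TruncatedWittVector p n k :=
  fun τ =>
    (p : TruncatedWittVector p n k) ^ f ((frobeniusEquiv k p).symm.toRingHom.comp τ) *
      TruncatedWittVector.mapRingHom n (frobenius k p)
        (v ((frobeniusEquiv k p).symm.toRingHom.comp τ))

/-- The Verschiebung `V` of the Dieudonné module `M(f)_n`: the additive,
`σ⁻¹`-semilinear map determined by `V e_{τ+1} = p ^ (1 - f τ) • e_τ`. -/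
noncomputable def wittV (f : (κ →+* k) → ℕ)
    (v : (κ →+* k) → TruncatedWittVector p n k) :
    (κ →+* k) → TruncatedWittVector p n k :=
  fun τ =>
    (p : TruncatedWittVector p n k) ^ (1 - f τ) *
      TruncatedWittVector.mapRingHom n (frobeniusEquiv k p).symm.toRingHom
        (v ((frobenius k p).comp τ))

end Dieudonne

namespace TruncatedWittVector

variable {p : ℕ} [Fact p.Prime] {n : ℕ} {R S T : Type*} [CommRing R] [CommRing S] [CommRing T]

theorem mapRingHom_truncate_s5 (f : R →+* S) (w : WittVector p R) :
    mapRingHom n f (WittVector.truncate n w) = WittVector.truncate n (WittVector.map f w) :=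
  RingHom.liftOfRightInverse_comp_apply _ _ _ _ w

theorem coeff_mapRingHom (f : R →+* S) (x : TruncatedWittVector p n R) (i : Fin n) :
    (mapRingHom n f x).coeff i = f (x.coeff i) := by
  obtain ⟨w, rfl⟩ := WittVector.truncate_surjective p n R x
  rw [mapRingHom_truncate_s5, WittVector.coeff_truncate, WittVector.map_coeff,
    WittVector.coeff_truncate]

theorem mapRingHom_comp (g : S →+* T) (f : R →+* S) :
    mapRingHom (p := p) n (g.comp f) = (mapRingHom n g).comp (mapRingHom n f) := by
  ext x i
  simp [coeff_mapRingHom]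

theorem mapRingHom_id : mapRingHom (p := p) n (RingHom.id R) = RingHom.id _ := by
  ext x i
  simp [coeff_mapRingHom]

theorem mapRingHom_injective {f : R →+* S} (hf : Function.Injective f) :
    Function.Injective (mapRingHom (p := p) n f) := fun x y h => by
  ext i
  apply hf
  rw [← coeff_mapRingHom, ← coeff_mapRingHom, h]

theorem exists_mapRingHom_eq (f : R →+* S) (y : TruncatedWittVector p n S)
    (hy : ∀ i, y.coeff i ∈ Set.range f) : ∃ x, mapRingHom n f x = y := by
  choose x hx using hy
  exact ⟨mk p x, by ext i; rw [coeff_mapRingHom, coeff_mk, hx]⟩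

theorem exists_isUnit_mapRingHom_sub {k : Type*} [Field k] [CharP k p] {τ τ' : R →+* k}
    (h : τ ≠ τ') : ∃ c : TruncatedWittVector p n R,
      IsUnit (mapRingHom n τ c - mapRingHom n τ' c) := by
  obtain ⟨x, hx⟩ := DFunLike.ne_iff.mp h
  refine ⟨WittVector.truncate n (WittVector.teichmuller p x), ?_⟩
  rw [mapRingHom_truncate_s5, mapRingHom_truncate_s5, WittVector.map_teichmuller,
    WittVector.map_teichmuller, ← map_sub]
  refine (WittVector.isUnit_of_coeff_zero_ne_zero _ ?_).map _
  rw [WittVector.sub_coeff_zero, WittVector.teichmuller_coeff_zero,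
    WittVector.teichmuller_coeff_zero]
  exact sub_ne_zero.mpr hx

end TruncatedWittVector

def RingHom.toZModAlgHom (p : ℕ) {K L : Type*} [Ring K] [Ring L] [Algebra (ZMod p) K]
    [Algebra (ZMod p) L] (τ : K →+* L) : K →ₐ[ZMod p] L :=
  { τ with
    commutes' := RingHom.congr_fun
      (Subsingleton.elim (τ.comp (algebraMap (ZMod p) K)) (algebraMap (ZMod p) L)) }

theorem RingHom.toZModAlgHom_injective (p : ℕ) {K L : Type*} [Ring K] [Ring L]
    [Algebra (ZMod p) K] [Algebra (ZMod p) L] :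
    Function.Injective (RingHom.toZModAlgHom p (K := K) (L := L)) :=
  fun _ _ h => RingHom.ext fun x => DFunLike.congr_fun h x

namespace FiniteField

open Polynomial in
theorem mem_range_of_pow_card_eq {K L : Type*} [Field K] [Fintype K] [Field L]
    (τ : K →+* L) {x : L} (hx : x ^ Fintype.card K = x) : x ∈ Set.range τ := by
  have h_ne : (X ^ Fintype.card K - X : L[X]) ≠ 0 :=
    X_pow_card_sub_X_ne_zero L Fintype.one_lt_card
  have h_roots : (X ^ Fintype.card K - X : L[X]).roots =
      (X ^ Fintype.card K - X : K[X]).roots.map τ := by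
    rw [roots_map_of_map_ne_zero_of_card_eq_natDegree τ (by simpa using h_ne)]
    · simp
    · rw [roots_X_pow_card_sub_X, X_pow_card_sub_X_natDegree_eq K Fintype.one_lt_card]
      simp
  have hx_root : x ∈ (X ^ Fintype.card K - X : L[X]).roots := by
    simp [mem_roots h_ne, hx]
  rw [h_roots, Multiset.mem_map] at hx_root
  obtain ⟨y, -, hy⟩ := hx_root
  exact ⟨y, hy⟩

theorem finite_ringHom (p : ℕ) [Fact p.Prime] {K L : Type*} [Field K] [Finite K] [CharP K p]
    [Field L] [CharP L p] : Finite (K →+* L) :=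
  let := ZMod.algebra K p
  let := ZMod.algebra L p
  Finite.of_injective _ (RingHom.toZModAlgHom_injective p)

theorem nonempty_ringHom (p : ℕ) [Fact p.Prime] {K L : Type*} [Field K] [Finite K] [CharP K p]
    [Field L] [IsAlgClosed L] [CharP L p] : Nonempty (K →+* L) :=
  let := ZMod.algebra K p
  let := ZMod.algebra L p
  ⟨(IsAlgClosed.lift : K →ₐ[ZMod p] L).toRingHom⟩

theorem exists_eq_iterateFrobenius_comp {p : ℕ} [Fact p.Prime] {K L : Type*} [Field K]
    [Fintype K] [CharP K p] [Field L] [CharP L p] (τ₀ τ : K →+* L) :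
    ∃ j, τ = (iterateFrobenius L p j).comp τ₀ := by
  let := ZMod.algebra K p
  let := ZMod.algebra L p
  have := finite_ringHom p (K := K) (L := L)
  -- There are at most `[K : 𝔽_p]` embeddings, and the Frobenius orbit of `τ₀` already has that
  -- many elements because the powers of the Frobenius of `K` below `[K : 𝔽_p]` are distinct.
  set d := Module.finrank (ZMod p) K
  let orbit : Fin d → (K →+* L) := fun j => (iterateFrobenius L p j).comp τ₀
  have h_inj : Function.Injective orbit := by
    intro i j hij
    apply (bijective_frobeniusAlgHom_pow (ZMod p) K).1
    ext x
    apply τ₀.injective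
    simpa [orbit, coe_frobeniusAlgHom, pow_iterate, iterateFrobenius_def] using
      RingHom.congr_fun hij x
  have h_card : Nat.card (K →+* L) ≤ Nat.card (Fin d) :=
    (Nat.card_le_card_of_injective _ (RingHom.toZModAlgHom_injective p)).trans
      ((card_algHom_le_finrank (ZMod p) K L).trans_eq (Nat.card_fin d).symm)
  obtain ⟨j, hj⟩ := (h_inj.bijective_of_nat_card_le h_card).2 τ
  exact ⟨j, hj.symm⟩

end FiniteField

section Frobenius

variable (p : ℕ) {R A : Type*} [CommRing R] [CommRing A] [ExpChar A p] [PerfectRing A p]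

@[simp]
theorem frobeniusEquiv_symm_comp_frobenius_comp (τ : R →+* A) :
    ((frobeniusEquiv A p).symm : A →+* A).comp ((frobenius A p).comp τ) = τ := by
  rw [← RingHom.comp_assoc, frobeniusEquiv_symm_comp_frobenius, RingHom.id_comp]

@[simp]
theorem frobenius_comp_frobeniusEquiv_symm_comp (τ : R →+* A) :
    (frobenius A p).comp (((frobeniusEquiv A p).symm : A →+* A).comp τ) = τ := by
  rw [← RingHom.comp_assoc, frobenius_comp_frobeniusEquiv_symm, RingHom.id_comp]

end Frobenius

open TruncatedWittVector

section WittEmbedding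

variable (p n : ℕ) [Fact p.Prime] (κ k : Type*) [CommRing κ] [Field k]

noncomputable def wittEmbedding :
    TruncatedWittVector p n κ →+* ((κ →+* k) → TruncatedWittVector p n k) :=
  RingHom.pi fun τ => mapRingHom n τ

theorem wittAct_eq_mul (c : TruncatedWittVector p n κ) :
    wittAct p n κ k c = (wittEmbedding p n κ k c * ·) :=
  rfl

variable [CharP k p] {κ k}

def IsFrobeniusEquivariant (a : (κ →+* k) → TruncatedWittVector p n k) : Prop :=
  ∀ τ, a ((frobenius k p).comp τ) = mapRingHom n (frobenius k p) (a τ)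

theorem isFrobeniusEquivariant_wittEmbedding (c : TruncatedWittVector p n κ) :
    IsFrobeniusEquivariant p n (wittEmbedding p n κ k c) := fun τ => by
  simp [wittEmbedding, RingHom.pi_apply, mapRingHom_comp]

variable {p n}

theorem exists_eq_mul_of_commute_wittAct [Finite (κ →+* k)]
    {ψ : ((κ →+* k) → TruncatedWittVector p n k) → ((κ →+* k) → TruncatedWittVector p n k)}
    (hψ : IsLinearMap (TruncatedWittVector p n k) ψ)
    (hcomm : ∀ c, ψ ∘ wittAct p n κ k c = wittAct p n κ k c ∘ ψ) :
    ∃ a, ψ = (a * ·) := by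
  classical
  have h_single : ∀ (τ : κ →+* k) (x : TruncatedWittVector p n k),
      Pi.single τ x = x • Pi.single τ 1 := fun τ x => by
    rw [← Pi.single_smul', smul_eq_mul, mul_one]
  have h_off : ∀ τ ρ, ρ ≠ τ → ψ (Pi.single τ 1) ρ = 0 := by
    intro τ ρ hρ
    obtain ⟨c, hc⟩ := exists_isUnit_mapRingHom_sub (p := p) (n := n) hρ.symm
    have h := congr_fun (congr_fun (hcomm c) (Pi.single τ 1)) ρ
    simp only [Function.comp_apply, wittAct_eq_mul, ← Pi.single_mul_right, mul_one] at h
    rw [h_single, hψ.map_smul] at h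
    simp only [Pi.smul_apply, Pi.mul_apply, smul_eq_mul, wittEmbedding, RingHom.pi_apply] at h
    rw [← hc.mul_right_eq_zero, sub_mul, h, sub_self]
  refine ⟨fun τ => ψ (Pi.single τ 1) τ, funext fun v => LinearMap.congr_fun
    (LinearMap.pi_ext (f := IsLinearMap.mk' ψ hψ) (g := LinearMap.mulLeft _ _) fun τ x => ?_) v⟩
  rw [IsLinearMap.mk'_apply, LinearMap.mulLeft_apply, ← Pi.single_mul_right, mul_comm,
    h_single, hψ.map_smul]
  funext ρ
  rcases eq_or_ne ρ τ with rfl | hρ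
  · simp
  · simp [h_off τ ρ hρ, hρ]

variable [PerfectField k]

theorem IsFrobeniusEquivariant.mul_comp_wittF {a : (κ →+* k) → TruncatedWittVector p n k}
    (ha : IsFrobeniusEquivariant p n a) (f : (κ →+* k) → ℕ) :
    (a * ·) ∘ wittF p n κ k f = wittF p n κ k f ∘ (a * ·) := by
  funext v τ
  have h := ha (((frobeniusEquiv k p).symm : k →+* k).comp τ)
  rw [frobenius_comp_frobeniusEquiv_symm_comp] at h
  simp only [Function.comp_apply, wittF, RingEquiv.toRingHom_eq_coe, Pi.mul_apply, map_mul, ← h]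
  ring

theorem IsFrobeniusEquivariant.mul_comp_wittV {a : (κ →+* k) → TruncatedWittVector p n k}
    (ha : IsFrobeniusEquivariant p n a) (f : (κ →+* k) → ℕ) :
    (a * ·) ∘ wittV p n κ k f = wittV p n κ k f ∘ (a * ·) := by
  funext v τ
  simp only [Function.comp_apply, wittV, Pi.mul_apply, map_mul, ha τ, ← RingHom.comp_apply,
    ← mapRingHom_comp, RingEquiv.toRingHom_eq_coe, frobeniusEquiv_symm_comp_frobenius,
    mapRingHom_id, RingHom.id_apply]
  ring

theorem isFrobeniusEquivariant_of_mul_comp {f : (κ →+* k) → ℕ} (hf : ∀ τ, f τ ≤ 1)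
    {a : (κ →+* k) → TruncatedWittVector p n k}
    (hF : (a * ·) ∘ wittF p n κ k f = wittF p n κ k f ∘ (a * ·))
    (hV : (a * ·) ∘ wittV p n κ k f = wittV p n κ k f ∘ (a * ·)) :
    IsFrobeniusEquivariant p n a := fun τ => by
  rcases Nat.le_one_iff_eq_zero_or_eq_one.mp (hf τ) with hτ | hτ
  · have h := congr_fun (congr_fun hF 1) ((frobenius k p).comp τ)
    simpa [wittF, hτ] using h
  · have h := congr_arg (mapRingHom n (frobenius k p)) (congr_fun (congr_fun hV 1) τ)
    simpa [wittV, hτ, ← RingHom.comp_apply, ← mapRingHom_comp, mapRingHom_id] using h.symm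

end WittEmbedding

section Descent

variable {p n : ℕ} [Fact p.Prime] {κ k : Type*} [Field κ] [Field k]

theorem wittEmbedding_injective [Nonempty (κ →+* k)] :
    Function.Injective (wittEmbedding p n κ k) := fun c d h => by
  obtain ⟨τ⟩ := ‹Nonempty (κ →+* k)›
  exact mapRingHom_injective τ.injective (congr_fun h τ)

theorem IsFrobeniusEquivariant.exists_eq_wittEmbedding [Fintype κ] [CharP κ p] [CharP k p]
    [Nonempty (κ →+* k)] {a : (κ →+* k) → TruncatedWittVector p n k}
    (ha : IsFrobeniusEquivariant p n a) : ∃ c, wittEmbedding p n κ k c = a := by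
  obtain ⟨τ₀⟩ := ‹Nonempty (κ →+* k)›
  have h_iter : ∀ j τ, a ((iterateFrobenius k p j).comp τ) =
      mapRingHom n (iterateFrobenius k p j) (a τ) := by
    intro j
    induction j with
    | zero => simp [mapRingHom_id]
    | succ j ih =>
      intro τ
      rw [add_comm, iterateFrobenius_add, iterateFrobenius_one, RingHom.comp_assoc, ha, ih,
        mapRingHom_comp, RingHom.comp_apply]
  obtain ⟨d, -, hd⟩ := FiniteField.card κ p
  have h_fix : (iterateFrobenius k p d).comp τ₀ = τ₀ := RingHom.ext fun x => by
    rw [RingHom.comp_apply, iterateFrobenius_def, ← map_pow, ← hd, FiniteField.pow_card]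
  obtain ⟨c, hc⟩ := exists_mapRingHom_eq τ₀ (a τ₀) fun i => by
    refine FiniteField.mem_range_of_pow_card_eq τ₀ ?_
    have h := congr_arg (coeff i) (h_iter d τ₀)
    rwa [h_fix, coeff_mapRingHom, iterateFrobenius_def, ← hd, eq_comm] at h
  refine ⟨c, funext fun τ => ?_⟩
  obtain ⟨j, rfl⟩ := FiniteField.exists_eq_iterateFrobenius_comp τ₀ τ
  rw [h_iter, ← hc]
  simp [wittEmbedding, RingHom.pi_apply, mapRingHom_comp]

end Descent

theorem stmt5_general (p n : ℕ) [Fact p.Prime]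
    (κ k : Type*) [Field κ] [Fintype κ] [CharP κ p]
    [Field k] [IsAlgClosed k] [CharP k p]
    (f : (κ →+* k) → ℕ) (hf : ∀ τ, f τ ≤ 1) :
    (∀ v, wittAct p n κ k 1 v = v) ∧
    (∀ c d v, wittAct p n κ k (c + d) v = wittAct p n κ k c v + wittAct p n κ k d v) ∧
    (∀ c d v, wittAct p n κ k (c * d) v = wittAct p n κ k c (wittAct p n κ k d v)) ∧
    Function.Injective (fun c : TruncatedWittVector p n κ => wittAct p n κ k c) ∧
    Set.range (fun c : TruncatedWittVector p n κ => wittAct p n κ k c) =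
      {ψ : ((κ →+* k) → TruncatedWittVector p n k) →
          ((κ →+* k) → TruncatedWittVector p n k) |
        IsLinearMap (TruncatedWittVector p n k) ψ ∧
        ψ ∘ wittF p n κ k f = wittF p n κ k f ∘ ψ ∧
        ψ ∘ wittV p n κ k f = wittV p n κ k f ∘ ψ ∧
        ∀ c, ψ ∘ wittAct p n κ k c = wittAct p n κ k c ∘ ψ} := by
  have := FiniteField.nonempty_ringHom p (K := κ) (L := k)
  have := FiniteField.finite_ringHom p (K := κ) (L := k)
  simp only [wittAct_eq_mul, map_one, map_add, map_mul]
  refine ⟨fun v => one_mul v, fun c d v => add_mul _ _ v, fun c d v => mul_assoc _ _ v,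
    fun c d h => wittEmbedding_injective (by simpa using congr_fun h 1), ?_⟩
  ext ψ
  constructor
  · rintro ⟨c, rfl⟩
    have hc := isFrobeniusEquivariant_wittEmbedding p n (k := k) c
    exact ⟨(LinearMap.mulLeft _ _).isLinear, hc.mul_comp_wittF f, hc.mul_comp_wittV f,
      fun d => funext fun v => mul_left_comm _ _ v⟩
  · rintro ⟨hψ, hF, hV, hcomm⟩
    obtain ⟨a, rfl⟩ := exists_eq_mul_of_commute_wittAct hψ hcomm
    obtain ⟨c, rfl⟩ := (isFrobeniusEquivariant_of_mul_comp hf hF hV).exists_eq_wittEmbedding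
    exact ⟨c, rfl⟩

/-- Lemma 3.3 of the paper, at the level of Dieudonné modules: for
`κ = 𝔽_{p^m}` and `k` algebraically closed of characteristic `p`, the
canonical map `W_n(κ) → End(M(f)_n)`, `c ↦ (e_τ ↦ W_n(τ)(c) · e_τ)`, is an
injective ring homomorphism whose image is exactly the set of
`W_n(k)`-linear endomorphisms of `M(f)_n` commuting with `F`, `V` and the
`W_n(κ)`-action. -/
theorem stmt5 (p m n : ℕ) [Fact p.Prime] (hm : 1 ≤ m) (hn : 1 ≤ n)
    (κ k : Type*) [Field κ] [Fintype κ] [CharP κ p]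
    (hcard : Fintype.card κ = p ^ m)
    [Field k] [IsAlgClosed k] [CharP k p]
    (f : (κ →+* k) → ℕ) (hf : ∀ τ, f τ ≤ 1) :
    (∀ v, wittAct p n κ k 1 v = v) ∧
    (∀ c d v, wittAct p n κ k (c + d) v = wittAct p n κ k c v + wittAct p n κ k d v) ∧
    (∀ c d v, wittAct p n κ k (c * d) v = wittAct p n κ k c (wittAct p n κ k d v)) ∧
    Function.Injective (fun c : TruncatedWittVector p n κ => wittAct p n κ k c) ∧
    Set.range (fun c : TruncatedWittVector p n κ => wittAct p n κ k c) =
      {ψ : ((κ →+* k) → TruncatedWittVector p n k) →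
          ((κ →+* k) → TruncatedWittVector p n k) |
        IsLinearMap (TruncatedWittVector p n k) ψ ∧
        ψ ∘ wittF p n κ k f = wittF p n κ k f ∘ ψ ∧
        ψ ∘ wittV p n κ k f = wittV p n κ k f ∘ ψ ∧
        ∀ c, ψ ∘ wittAct p n κ k c = wittAct p n κ k c ∘ ψ} :=
  stmt5_general p n κ k f hf
end

section
/- Let M and N be abelian groups, R a commutative ring, and β : M × N → R a biadditive map. Define the Heisenberg group H(β) to be the set M × N × R with multiplication (x, z, c)·(x′, z′, c′) = (x + x′, z + z′, c + c′ + β(x, z′)); this operation makes H(β) a group with identity (0,0,0). If S is a subgroup of H(β) such that the projection H(β) → M, (x, z, c) ↦ x, is injective on S, then β(x, z′) = β(x′, z) for all elements (x, z, c) and (x′, z′, c′) of S. -/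
/-!
The projection `(x, z, c) ↦ x` is a homomorphism onto the abelian group `M`, so a subgroup on
which it is injective is commutative. In `H(β)` two elements commute exactly when the
`β`-terms of the two products agree, i.e. when `β x z' = β x' z`.
-/

/-- The Heisenberg group `H(β)` associated to a biadditive map
`β : M × N → R`: the underlying set is `M × N × R` with multiplication
`(x, z, c) · (x', z', c') = (x + x', z + z', c + c' + β x z')`. -/
@[ext]
structure Heisenberg (M N R : Type*) [AddCommGroup M] [AddCommGroup N]
    [CommRing R] (β : M →+ N →+ R) where
  x : M
  z : N
  c : R

namespace Heisenberg

variable {M N R : Type*} [AddCommGroup M] [AddCommGroup N] [CommRing R]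
  {β : M →+ N →+ R}

instance : Mul (Heisenberg M N R β) :=
  ⟨fun a b => ⟨a.x + b.x, a.z + b.z, a.c + b.c + β a.x b.z⟩⟩

instance : One (Heisenberg M N R β) := ⟨⟨0, 0, 0⟩⟩

instance : Inv (Heisenberg M N R β) :=
  ⟨fun a => ⟨-a.x, -a.z, -a.c + β a.x a.z⟩⟩

@[simp] theorem mul_x (a b : Heisenberg M N R β) : (a * b).x = a.x + b.x := rfl
@[simp] theorem mul_z (a b : Heisenberg M N R β) : (a * b).z = a.z + b.z := rfl
@[simp] theorem mul_c (a b : Heisenberg M N R β) :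
    (a * b).c = a.c + b.c + β a.x b.z := rfl
@[simp] theorem one_x : (1 : Heisenberg M N R β).x = 0 := rfl
@[simp] theorem one_z : (1 : Heisenberg M N R β).z = 0 := rfl
@[simp] theorem one_c : (1 : Heisenberg M N R β).c = 0 := rfl
@[simp] theorem inv_x (a : Heisenberg M N R β) : a⁻¹.x = -a.x := rfl
@[simp] theorem inv_z (a : Heisenberg M N R β) : a⁻¹.z = -a.z := rfl
@[simp] theorem inv_c (a : Heisenberg M N R β) : a⁻¹.c = -a.c + β a.x a.z := rfl

instance instGroup : Group (Heisenberg M N R β) where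
  mul_assoc a b c := by
    ext <;> (simp [map_add, AddMonoidHom.add_apply]; try abel)
  one_mul a := by ext <;> simp
  mul_one a := by ext <;> simp
  inv_mul_cancel a := by
    ext <;> (simp [map_neg, AddMonoidHom.neg_apply]; try abel)

end Heisenberg

theorem commute_of_injOn_of_map_mul {G H S : Type*} [Mul G] [CommMagma H] [SetLike S G]
    [MulMemClass S G] (f : G →ₙ* H) {s : S} (hf : Set.InjOn f s) {a b : G} (ha : a ∈ s)
    (hb : b ∈ s) : Commute a b :=
  hf (mul_mem ha hb) (mul_mem hb ha) (by rw [map_mul, map_mul, mul_comm])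

namespace Heisenberg

variable {M N R : Type*} [AddCommGroup M] [AddCommGroup N] [CommRing R] {β : M →+ N →+ R}

variable (β) in
def xHom : Heisenberg M N R β →ₙ* Multiplicative M where
  toFun a := Multiplicative.ofAdd a.x
  map_mul' _ _ := rfl

theorem commute_iff {a b : Heisenberg M N R β} : Commute a b ↔ β a.x b.z = β b.x a.z := by
  refine ⟨fun h => ?_, fun h => ?_⟩
  · have hc := congrArg Heisenberg.c h.eq
    simp only [mul_c] at hc
    linear_combination hc
  · ext <;> simp only [mul_x, mul_z, mul_c, h, add_comm]

end Heisenberg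

/-- Let `M`, `N` be abelian groups, `R` a commutative ring, `β : M × N → R` a
biadditive map, and `H(β)` the associated Heisenberg group.  If `S` is a
subgroup of `H(β)` on which the projection `(x, z, c) ↦ x` is injective, then
`β x z' = β x' z` for all `(x, z, c)` and `(x', z', c')` in `S`. -/
theorem stmt11 {M N R : Type*} [AddCommGroup M] [AddCommGroup N] [CommRing R]
    (β : M →+ N →+ R) (S : Subgroup (Heisenberg M N R β))
    (hinj : Set.InjOn (fun a : Heisenberg M N R β => a.x)
      (S : Set (Heisenberg M N R β))) :
    ∀ a ∈ S, ∀ b ∈ S, β a.x b.z = β b.x a.z := by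
  intro a ha b hb
  have hproj : Set.InjOn (Heisenberg.xHom β) S := Multiplicative.ofAdd.injective.comp_injOn hinj
  exact Heisenberg.commute_iff.mp (commute_of_injOn_of_map_mul _ hproj ha hb)
end
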